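/- Let g : [0,∞) → ℝ be nonnegative measurable with support in [0,T], Υ = ∫₀^∞ g(u)² du, and μ = ∫₀^∞ u g(u)² du / Υ with μ + T/k < 1. Then ∫_{Δ_k(1)} ∏_{j=1}^k g(k t_j)² dt ≥ (Υ^{k−1}/k^k)·(1 − T/(k(1 − T/k − μ)²))·∫₀^∞ g(u)² du. -/

import Mathlib

/-!
Put `f = g²`. Up to normalisation, `∏ j, f (k t_j)` is the joint density of `k` independent
copies of a variable with density proportional to `f (k ·)`, so of mean `μ / k`. Over the whole
orthant the integral is `(Υ / k) ^ k`; the mass outside the simplex, where `∑ t_j > 1`, is bounded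
by Chebyshev's inequality for the sum of the coordinates, whose variance is `k` times the
variance of one coordinate. The latter is controlled by the Bhatia–Davis inequality: a density on
`[0, T]` with mean `μ` has variance at most `μ (T - μ) ≤ T`.
-/

open MeasureTheory Set

section ProductMoments

variable {α ι : Type*} [Fintype ι] [DecidableEq ι]

theorem integral_pi_prod_ite [MeasurableSpace α] {μ : Measure α} [SigmaFinite μ] (φ ψ : α → ℝ)
    (i : ι) :
    ∫ t : ι → α, ∏ l, (if l = i then ψ else φ) (t l) ∂Measure.pi (fun _ => μ) =
      (∫ x, ψ x ∂μ) * (∫ x, φ x ∂μ) ^ (Fintype.card ι - 1) := by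
  rw [integral_fintype_prod_eq_prod, ← Finset.mul_prod_erase _ _ (Finset.mem_univ i), if_pos rfl,
    Finset.prod_congr rfl fun l hl => by rw [if_neg (Finset.ne_of_mem_erase hl)],
    Finset.prod_const, Finset.card_erase_of_mem (Finset.mem_univ i), Finset.card_univ]

def pairFactor (a φ : α → ℝ) (i j l : ι) (x : α) : ℝ :=
  (if l = i then a x else 1) * ((if l = j then a x else 1) * φ x)

theorem sq_sum_mul_prod_eq_sum_prod_pairFactor (a φ : α → ℝ) (t : ι → α) :
    (∑ i, a (t i)) ^ 2 * ∏ l, φ (t l) = ∑ i, ∑ j, ∏ l, pairFactor a φ i j l (t l) := by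
  rw [sq, Finset.sum_mul_sum, Finset.sum_mul]
  refine Finset.sum_congr rfl fun i _ => Finset.sum_mul _ _ _ |>.trans <|
    Finset.sum_congr rfl fun j _ => ?_
  simp only [pairFactor, Finset.prod_mul_distrib, Finset.prod_ite_eq', Finset.mem_univ, if_true]
  ring

variable [MeasurableSpace α] {μ : Measure α} [SigmaFinite μ] {φ a : α → ℝ}

theorem integrable_pi_prod_pairFactor (hφ : Integrable φ μ)
    (haφ : Integrable (fun x => a x * φ x) μ) (ha2φ : Integrable (fun x => a x ^ 2 * φ x) μ)
    (i j : ι) :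
    Integrable (fun t : ι → α => ∏ l, pairFactor a φ i j l (t l)) (Measure.pi fun _ => μ) := by
  refine Integrable.fintype_prod fun l => ?_
  unfold pairFactor
  split_ifs
  · simpa only [← mul_assoc, ← sq] using ha2φ
  · simpa only [one_mul] using haφ
  · simpa only [one_mul] using haφ
  · simpa only [one_mul] using hφ

theorem integrable_pi_sq_sum_mul_prod (hφ : Integrable φ μ)
    (haφ : Integrable (fun x => a x * φ x) μ) (ha2φ : Integrable (fun x => a x ^ 2 * φ x) μ) :
    Integrable (fun t : ι → α => (∑ i, a (t i)) ^ 2 * ∏ i, φ (t i)) (Measure.pi fun _ => μ) := by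
  simp_rw [sq_sum_mul_prod_eq_sum_prod_pairFactor]
  exact integrable_finsetSum _ fun i _ => integrable_finsetSum _ fun j _ =>
    integrable_pi_prod_pairFactor hφ haφ ha2φ i j

theorem integral_pi_prod_pairFactor (hcenter : ∫ x, a x * φ x ∂μ = 0) (i j : ι) :
    ∫ t : ι → α, ∏ l, pairFactor a φ i j l (t l) ∂Measure.pi (fun _ => μ) =
      if i = j then (∫ x, a x ^ 2 * φ x ∂μ) * (∫ x, φ x ∂μ) ^ (Fintype.card ι - 1) else 0 := by
  split_ifs with hij
  · subst hij
    rw [← integral_pi_prod_ite φ (fun x => a x ^ 2 * φ x) i]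
    congr with t
    refine Finset.prod_congr rfl fun l _ => ?_
    unfold pairFactor
    split_ifs <;> ring
  · -- off the diagonal, coordinate `i` contributes the factor `∫ a φ = 0`
    rw [integral_fintype_prod_eq_prod]
    refine Finset.prod_eq_zero (Finset.mem_univ i) ?_
    simpa [pairFactor, hij] using hcenter

theorem integral_pi_sq_sum_mul_prod (hφ : Integrable φ μ)
    (haφ : Integrable (fun x => a x * φ x) μ) (ha2φ : Integrable (fun x => a x ^ 2 * φ x) μ)
    (hcenter : ∫ x, a x * φ x ∂μ = 0) :
    ∫ t : ι → α, (∑ i, a (t i)) ^ 2 * ∏ i, φ (t i) ∂Measure.pi (fun _ => μ) =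
      Fintype.card ι * (∫ x, a x ^ 2 * φ x ∂μ) * (∫ x, φ x ∂μ) ^ (Fintype.card ι - 1) := by
  have hint := integrable_pi_prod_pairFactor hφ haφ ha2φ (ι := ι)
  simp_rw [sq_sum_mul_prod_eq_sum_prod_pairFactor]
  rw [integral_finsetSum _ fun i _ => integrable_finsetSum _ fun j _ => hint i j]
  simp_rw [integral_finsetSum _ fun j _ => hint _ j, integral_pi_prod_pairFactor hcenter,
    Finset.sum_ite_eq, Finset.mem_univ, if_true, Finset.sum_const, Finset.card_univ,
    nsmul_eq_mul, mul_assoc]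

end ProductMoments

theorem setIntegral_le_integral_sq_mul_div {α : Type*} [MeasurableSpace α] {μ : Measure α}
    {F w : α → ℝ} {s : Set α} {c : ℝ} (hs : MeasurableSet s) (hF0 : ∀ x, 0 ≤ F x)
    (hwF : Integrable (fun x => w x ^ 2 * F x) μ) (hc : 0 < c)
    (hw : ∀ x ∈ s, F x ≠ 0 → c ≤ w x) :
    ∫ x in s, F x ∂μ ≤ (∫ x, w x ^ 2 * F x ∂μ) / c ^ 2 := by
  have hpt : ∀ x ∈ s, F x ≤ w x ^ 2 * F x / c ^ 2 := by
    intro x hx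
    rcases eq_or_ne (F x) 0 with h | h
    · simp [h]
    rw [le_div_iff₀ (by positivity)]
    have : c ^ 2 ≤ w x ^ 2 := pow_le_pow_left₀ hc.le (hw x hx h) 2
    nlinarith [hF0 x]
  calc ∫ x in s, F x ∂μ ≤ ∫ x in s, w x ^ 2 * F x / c ^ 2 ∂μ :=
        integral_mono_of_nonneg (Filter.Eventually.of_forall fun x => hF0 x)
          (hwF.div_const _).integrableOn ((ae_restrict_iff' hs).2 (Filter.Eventually.of_forall hpt))
    _ = (∫ x in s, w x ^ 2 * F x ∂μ) / c ^ 2 := integral_div _ _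
    _ ≤ (∫ x, w x ^ 2 * F x ∂μ) / c ^ 2 := by
        gcongr ?_ / _
        exact setIntegral_le_integral hwF
          (Filter.Eventually.of_forall fun x => mul_nonneg (sq_nonneg _) (hF0 x))

theorem integral_simplex_prod_ge {ι : Type*} [Fintype ι] {Ψ : ℝ → ℝ} {ν : ℝ}
    (hΨ : Integrable Ψ) (hΨ0 : ∀ x, 0 ≤ Ψ x) (hΨsupp : Function.support Ψ ⊆ Ici 0)
    (h1 : Integrable (fun x => (x - ν) * Ψ x)) (h2 : Integrable (fun x => (x - ν) ^ 2 * Ψ x))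
    (hcenter : ∫ x, (x - ν) * Ψ x = 0) (hν : Fintype.card ι * ν < 1) :
    (∫ x, Ψ x) ^ Fintype.card ι - Fintype.card ι * (∫ x, (x - ν) ^ 2 * Ψ x) *
        (∫ x, Ψ x) ^ (Fintype.card ι - 1) / (1 - Fintype.card ι * ν) ^ 2 ≤
      ∫ t in {t : ι → ℝ | (∀ j, 0 ≤ t j) ∧ ∑ j, t j ≤ 1}, ∏ j, Ψ (t j) := by
  classical
  set S := {t : ι → ℝ | (∀ j, 0 ≤ t j) ∧ ∑ j, t j ≤ 1}
  have hS : MeasurableSet S := by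
    simp only [S, ofPred_and, ofPred_forall]
    exact (MeasurableSet.iInter fun j => measurableSet_le measurable_const
      (measurable_pi_apply j)).inter (measurableSet_le
        (Finset.measurable_sum _ fun j _ => measurable_pi_apply j) measurable_const)
  have hF : Integrable (fun t : ι → ℝ => ∏ j, Ψ (t j)) := by
    rw [volume_pi]; exact Integrable.fintype_prod fun _ => hΨ
  have hwF : Integrable (fun t : ι → ℝ => (∑ j, (t j - ν)) ^ 2 * ∏ j, Ψ (t j)) := by
    rw [volume_pi]; exact integrable_pi_sq_sum_mul_prod (a := fun x => x - ν) hΨ h1 h2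
  have hmass : ∫ t : ι → ℝ, ∏ j, Ψ (t j) = (∫ x, Ψ x) ^ Fintype.card ι := by
    rw [volume_pi, integral_fintype_prod_eq_pow]
  have hvar : ∫ t : ι → ℝ, (∑ j, (t j - ν)) ^ 2 * ∏ j, Ψ (t j) =
      Fintype.card ι * (∫ x, (x - ν) ^ 2 * Ψ x) * (∫ x, Ψ x) ^ (Fintype.card ι - 1) := by
    rw [volume_pi, integral_pi_sq_sum_mul_prod (a := fun x => x - ν) hΨ h1 h2 hcenter]
  have htail : ∀ t ∈ Sᶜ, ∏ j, Ψ (t j) ≠ 0 → 1 - Fintype.card ι * ν ≤ ∑ j, (t j - ν) := by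
    intro t ht hne
    have hpos : ∀ j, 0 ≤ t j := fun j =>
      hΨsupp (Finset.prod_ne_zero_iff.1 hne j (Finset.mem_univ j))
    have hsum : 1 < ∑ j, t j := not_le.1 fun h => ht ⟨hpos, h⟩
    rw [Finset.sum_sub_distrib, Finset.sum_const, Finset.card_univ, nsmul_eq_mul]
    linarith
  have hsplit := integral_add_compl hS hF
  have hmarkov := setIntegral_le_integral_sq_mul_div hS.compl
    (fun t => Finset.prod_nonneg fun j _ => hΨ0 (t j)) hwF (by linarith) htail
  rw [hmass] at hsplit
  rw [hvar] at hmarkov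
  linarith

theorem MeasureTheory.Integrable.continuous_mul_of_support_subset {X : Type*}
    [TopologicalSpace X] [T2Space X] [MeasurableSpace X] [OpensMeasurableSpace X]
    {μ : Measure X} {f w : X → ℝ} {K : Set X} (hf : Integrable f μ) (hK : IsCompact K)
    (hfK : Function.support f ⊆ K) (hw : Continuous w) :
    Integrable (fun x => w x * f x) μ :=
  (integrableOn_iff_integrable_of_support_subset
    ((Function.support_mul_subset_right _ _).trans hfK)).1
    (hf.integrableOn.continuousOn_mul hw.continuousOn hK)

theorem integral_sub_mul_eq_zero {μ : Measure ℝ} {f : ℝ → ℝ} {m : ℝ} (hf : Integrable f μ)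
    (huf : Integrable (fun u => u * f u) μ) (hm : ∫ u, u * f u ∂μ = m * ∫ u, f u ∂μ) :
    ∫ u, (u - m) * f u ∂μ = 0 := by
  simp only [sub_mul]
  rw [integral_sub huf (hf.const_mul m), integral_const_mul, hm, sub_self]

theorem integral_sq_sub_mul_le {f : ℝ → ℝ} {T m : ℝ} (hf : Integrable f) (hf0 : ∀ u, 0 ≤ f u)
    (hfT : Function.support f ⊆ Icc 0 T) (hm : ∫ u, u * f u = m * ∫ u, f u) :
    ∫ u, (u - m) ^ 2 * f u ≤ m * (T - m) * ∫ u, f u := by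
  have hint : ∀ w : ℝ → ℝ, Continuous w → Integrable (fun u => w u * f u) := fun w hw =>
    hf.continuous_mul_of_support_subset isCompact_Icc hfT hw
  have hpt : ∀ u, (u - m) ^ 2 * f u ≤ (T - 2 * m) * (u * f u) + m ^ 2 * f u := by
    intro u
    by_cases hu : u ∈ Icc 0 T
    · nlinarith [mul_nonneg (mul_nonneg hu.1 (sub_nonneg.2 hu.2)) (hf0 u)]
    · simp [Function.notMem_support.1 fun h => hu (hfT h)]
  calc ∫ u, (u - m) ^ 2 * f u
      ≤ ∫ u, (T - 2 * m) * (u * f u) + m ^ 2 * f u :=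
        integral_mono (hint _ (by fun_prop))
          (((hint (fun u => u) continuous_id).const_mul _).add (hf.const_mul _)) hpt
    _ = m * (T - m) * ∫ u, f u := by
        rw [integral_add ((hint (fun u => u) continuous_id).const_mul _) (hf.const_mul _),
          integral_const_mul, integral_const_mul, hm]
        ring

theorem integral_sub_div_pow_mul_comp_mul (f : ℝ → ℝ) {K : ℝ} (hK : 0 < K) (m : ℝ) (n : ℕ) :
    ∫ x, (x - m / K) ^ n * f (K * x) = (∫ u, (u - m) ^ n * f u) / K ^ (n + 1) := by
  simp only [sub_div' hK.ne', mul_comm _ K]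
  rw [Measure.integral_comp_mul_left (fun u => ((u - m) / K) ^ n * f u),
    abs_of_pos (inv_pos.2 hK), smul_eq_mul]
  simp only [div_pow, div_mul_eq_mul_div, integral_div]
  field_simp
  ring

theorem integrable_sub_div_pow_mul_comp_mul {f : ℝ → ℝ} {s : Set ℝ} {K : ℝ} (hf : Integrable f)
    (hs : IsCompact s) (hfs : Function.support f ⊆ s) (hK : K ≠ 0) (m : ℝ) (n : ℕ) :
    Integrable (fun x => (x - m / K) ^ n * f (K * x)) := by
  simp only [sub_div' hK, mul_comm _ K]
  exact (hf.continuous_mul_of_support_subset (w := fun u => ((u - m) / K) ^ n) hs hfs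
    (by fun_prop)).comp_mul_left' hK

theorem integral_simplex_prod_comp_mul_ge_sub {k : ℕ} (hk : 0 < k) {f : ℝ → ℝ} {T m : ℝ}
    (hf : Integrable f) (hf0 : ∀ u, 0 ≤ f u) (hfT : Function.support f ⊆ Icc 0 T)
    (hm : ∫ u, u * f u = m * ∫ u, f u) (hm1 : m < 1) :
    ((∫ u, f u) / k) ^ k -
        (∫ u, (u - m) ^ 2 * f u) * ((∫ u, f u) / k) ^ (k - 1) / ((k : ℝ) ^ 2 * (1 - m) ^ 2) ≤
      ∫ t in {t : Fin k → ℝ | (∀ j, 0 ≤ t j) ∧ ∑ j, t j ≤ 1}, ∏ j, f (k * t j) := by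
  set K : ℝ := (k : ℝ)
  have hK : 0 < K := by positivity
  have hint := integrable_sub_div_pow_mul_comp_mul hf isCompact_Icc hfT hK.ne' m
  have hmom := integral_sub_div_pow_mul_comp_mul f hK m
  have hcenter : ∫ u, (u - m) * f u = 0 := integral_sub_mul_eq_zero hf
    (hf.continuous_mul_of_support_subset (w := fun u => u) isCompact_Icc hfT continuous_id) hm
  have key := integral_simplex_prod_ge (ι := Fin k) (Ψ := fun x => f (K * x)) (ν := m / K)
    (by simpa using hint 0) (fun x => hf0 _)
    (fun x hx => mem_Ici.2 ((mul_nonneg_iff_of_pos_left hK).1 (hfT hx).1))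
    (by simpa using hint 1) (hint 2) (by simpa [hcenter] using hmom 1)
    (by rwa [Fintype.card_fin, mul_div_cancel₀ _ hK.ne'])
  have hmass := hmom 0
  simp only [pow_zero, one_mul, zero_add, pow_one] at hmass
  rw [Fintype.card_fin, mul_div_cancel₀ _ hK.ne', hmass, hmom 2] at key
  convert key using 2
  field_simp
  ring

theorem integral_simplex_prod_comp_mul_ge {k : ℕ} (hk : 0 < k) {f : ℝ → ℝ} {T m : ℝ}
    (hT : 0 ≤ T) (hf : Integrable f) (hf0 : ∀ u, 0 ≤ f u) (hfT : Function.support f ⊆ Icc 0 T)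
    (hm : ∫ u, u * f u = m * ∫ u, f u) (hsmall : m + T / k < 1) :
    (∫ u, f u) ^ (k - 1) / (k : ℝ) ^ k * (1 - T / (k * (1 - T / k - m) ^ 2)) * ∫ u, f u ≤
      ∫ t in {t : Fin k → ℝ | (∀ j, 0 ≤ t j) ∧ ∑ j, t j ≤ 1}, ∏ j, f (k * t j) := by
  set K : ℝ := (k : ℝ)
  set Υ := ∫ u, f u
  have hK : 0 < K := by positivity
  have hTK : 0 ≤ T / K := div_nonneg hT hK.le
  have hΔ : 0 < 1 - T / K - m := by linarith
  have hΥ0 : 0 ≤ Υ := integral_nonneg hf0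
  have hV : ∫ u, (u - m) ^ 2 * f u ≤ T * Υ :=
    (integral_sq_sub_mul_le hf hf0 hfT hm).trans (mul_le_mul_of_nonneg_right
      (by nlinarith [mul_nonneg hT (sub_nonneg.2 (by linarith : m ≤ 1)), sq_nonneg m]) hΥ0)
  obtain ⟨n, rfl⟩ : ∃ n, k = n + 1 := ⟨k - 1, by omega⟩
  calc Υ ^ (n + 1 - 1) / K ^ (n + 1) * (1 - T / (K * (1 - T / K - m) ^ 2)) * Υ
      = (Υ / K) ^ (n + 1) - T * Υ * (Υ / K) ^ (n + 1 - 1) / (K ^ 2 * (1 - T / K - m) ^ 2) := by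
        rw [Nat.add_sub_cancel, div_pow, div_pow]
        field_simp
        ring
    _ ≤ (Υ / K) ^ (n + 1) -
          (∫ u, (u - m) ^ 2 * f u) * (Υ / K) ^ (n + 1 - 1) / (K ^ 2 * (1 - m) ^ 2) := by
        gcongr
        linarith
    _ ≤ _ := integral_simplex_prod_comp_mul_ge_sub hk hf hf0 hfT hm (by linarith)

theorem setIntegral_Ioi_eq_integral_of_support_subset {h : ℝ → ℝ} {a : ℝ}
    (hh : Function.support h ⊆ Ici a) : ∫ u in Ioi a, h u = ∫ u, h u := by
  rw [← integral_Ici_eq_integral_Ioi]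
  exact setIntegral_eq_integral_of_forall_compl_eq_zero fun u hu =>
    Function.notMem_support.1 fun h => hu (hh h)

theorem integrableOn_Ioi_iff_integrable_of_support_subset {h : ℝ → ℝ} {a : ℝ}
    (hh : Function.support h ⊆ Ici a) : IntegrableOn h (Ioi a) ↔ Integrable h := by
  rw [← integrableOn_Ici_iff_integrableOn_Ioi, integrableOn_iff_integrable_of_support_subset hh]

theorem stmt_11_general (k : ℕ) (hk : 2 ≤ k) (T : ℝ) (hT : 0 < T)
    (g : ℝ → ℝ) (Υ μ : ℝ)
    (hg_supp : ∀ u, u ∉ Set.Icc 0 T → g u = 0)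
    (hΥ : ∫ u in Set.Ioi (0:ℝ), (g u)^2 = Υ) (hΥpos : 0 < Υ)
    (hμ : μ = (∫ u in Set.Ioi (0:ℝ), u * (g u)^2) / Υ)
    (hsmall : μ + T / k < 1) :
    ∫ t in {t : Fin k → ℝ | (∀ j, 0 ≤ t j) ∧ ∑ j, t j ≤ 1},
        ∏ j, (g ((k:ℝ) * t j))^2
      ≥ (Υ^(k-1) / (k:ℝ)^k) * (1 - T / ((k:ℝ) * (1 - T/(k:ℝ) - μ)^2)) *
          ∫ u in Set.Ioi (0:ℝ), (g u)^2 := by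
  have hfT : Function.support (fun u => g u ^ 2) ⊆ Icc 0 T := fun u hu =>
    by_contra fun h => hu (by simp [hg_supp u h])
  have hfI : Function.support (fun u => g u ^ 2) ⊆ Ici 0 := hfT.trans Icc_subset_Ici_self
  have hf : Integrable (fun u => g u ^ 2) :=
    (integrableOn_Ioi_iff_integrable_of_support_subset hfI).1
      (Integrable.of_integral_ne_zero (hΥ ▸ hΥpos.ne'))
  rw [setIntegral_Ioi_eq_integral_of_support_subset hfI] at hΥ ⊢
  rw [setIntegral_Ioi_eq_integral_of_support_subset
    ((Function.support_mul_subset_right _ _).trans hfI)] at hμ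
  have hm : ∫ u, u * g u ^ 2 = μ * ∫ u, g u ^ 2 := by
    rw [hμ, hΥ, div_mul_cancel₀ _ hΥpos.ne']
  have := integral_simplex_prod_comp_mul_ge (by omega) hT.le hf (fun u => sq_nonneg _) hfT hm
    hsmall
  rw [hΥ] at this ⊢
  exact this

theorem stmt_11 (k : ℕ) (hk : 2 ≤ k) (T : ℝ) (hT : 0 < T) (hTk : T ≤ k)
    (g : ℝ → ℝ) (Υ μ : ℝ)
    (hg_meas : Measurable g) (hg_nonneg : ∀ u, 0 ≤ g u)
    (hg_supp : ∀ u, u ∉ Set.Icc 0 T → g u = 0)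
    (hΥ : ∫ u in Set.Ioi (0:ℝ), (g u)^2 = Υ) (hΥpos : 0 < Υ)
    (hμ : μ = (∫ u in Set.Ioi (0:ℝ), u * (g u)^2) / Υ)
    (hsmall : μ + T / k < 1) :
    ∫ t in {t : Fin k → ℝ | (∀ j, 0 ≤ t j) ∧ ∑ j, t j ≤ 1},
        ∏ j, (g ((k:ℝ) * t j))^2
      ≥ (Υ^(k-1) / (k:ℝ)^k) * (1 - T / ((k:ℝ) * (1 - T/(k:ℝ) - μ)^2)) *
          ∫ u in Set.Ioi (0:ℝ), (g u)^2 :=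
  stmt_11_general k hk T hT g Υ μ hg_supp hΥ hΥpos hμ hsmall
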